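/- Let E be a finite-dimensional normed space, X a Banach lattice, and T : E → X a bounded linear operator. Then the supremum s = ⋁_{‖z‖ ≤ 1} |Tz| exists in X, and ‖s‖ equals the majorizing norm ‖T‖_m of T, i.e., the smallest M such that ‖⋁_{k=1}^n |T x_k|‖ ≤ M · max_k ‖x_k‖ for all finite families x₁,…,xₙ ∈ E. -/

import Mathlib

/-!
Expanding in a basis of the finite-dimensional space `E` gives `u ≥ 0` with `|T v| ≤ ‖v‖ • u`.
Let `(w k)` be dense in the unit ball. By compactness some initial segment `w 0, …, w N` is an
`ε`-net of the ball, so `|T z| ≤ ⋁_{k ≤ N} |T (w k)| + ε • u` whenever `‖z‖ ≤ 1`. The partial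
suprema `⋁_{k ≤ N} |T (w k)|` therefore increase with norm-Cauchy increments, and their limit `s`
is the supremum of `{|T z| : ‖z‖ ≤ 1}`. By homogeneity `⋁_k |T (x k)| ≤ (max_k ‖x k‖) • s`, so
`‖s‖` is an admissible constant; conversely `‖s‖` is the limit of the norms of the partial
suprema, each of which is bounded by every admissible constant.
-/

open Filter Topology Metric

lemma inv_two_pow_smul_nonneg {X : Type*} [AddCommGroup X] [Lattice X] [IsOrderedAddMonoid X]
    [Module ℝ X] {x : X} (hx : 0 ≤ x) (k : ℕ) : 0 ≤ ((2 : ℝ) ^ k)⁻¹ • x := by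
  induction k with
  | zero => simpa using hx
  | succ k ih =>
    refine nsmul_two_semiclosed ?_
    convert ih using 1
    rw [← Nat.cast_smul_eq_nsmul ℝ, smul_smul, pow_succ, Nat.cast_ofNat]
    congr 1
    field_simp

section SolidNorm

variable {X : Type*} [NormedAddCommGroup X] [Lattice X] [HasSolidNorm X] [IsOrderedAddMonoid X]

lemma norm_le_norm_of_nonneg_of_le {a b : X} (ha : 0 ≤ a) (hab : a ≤ b) : ‖a‖ ≤ ‖b‖ :=
  norm_le_norm_of_abs_le_abs <| by rwa [abs_of_nonneg ha, abs_of_nonneg (ha.trans hab)]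

variable [NormedSpace ℝ X]

instance HasSolidNorm.toPosSMulMono : PosSMulMono ℝ X :=
  PosSMulMono.of_smul_nonneg fun r hr x hx => by
    -- the positive cone is closed and stable under halving, hence under dyadic scalars
    have hdyadic : Tendsto (fun k : ℕ => (⌊r * 2 ^ k⌋₊ : ℝ) / 2 ^ k) atTop (𝓝 r) :=
      (tendsto_nat_floor_mul_div_atTop hr).comp (tendsto_pow_atTop_atTop_of_one_lt one_lt_two)
    refine ge_of_tendsto' (hdyadic.smul_const x) fun k => ?_
    rw [div_eq_mul_inv, mul_smul, Nat.cast_smul_eq_nsmul]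
    exact nsmul_nonneg (inv_two_pow_smul_nonneg hx k) _

theorem cauchySeq_partialSups_of_le_add_smul {f : ℕ → X} (u : X)
    (h : ∀ ε : ℝ, 0 < ε → ∃ N, ∀ k, f k ≤ partialSups f N + ε • u) :
    CauchySeq (partialSups f) := by
  refine Metric.cauchySeq_iff'.2 fun ε hε => ?_
  set δ := ε / (‖u‖ + 1)
  have hδ : 0 < δ := by positivity
  obtain ⟨N, hN⟩ := h δ hδ
  refine ⟨N, fun n hn => ?_⟩
  have hle : partialSups f n - partialSups f N ≤ δ • u :=
    sub_le_iff_le_add'.2 (partialSups_le f n _ fun k _ => hN k)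
  calc dist (partialSups f n) (partialSups f N)
      ≤ ‖δ • u‖ := by
        rw [dist_eq_norm]
        exact norm_le_norm_of_nonneg_of_le (sub_nonneg.2 (partialSups_monotone f hn)) hle
    _ = δ * ‖u‖ := by rw [norm_smul, Real.norm_of_nonneg hδ.le]
    _ < ε := by
        rw [div_mul_eq_mul_div, div_lt_iff₀ (by positivity)]
        nlinarith [norm_nonneg u]

theorem exists_tendsto_partialSups_isLUB_of_le_add_smul [CompleteSpace X] {A : Set X}
    {f : ℕ → X} (hfA : ∀ k, f k ∈ A) (u : X)
    (h : ∀ ε : ℝ, 0 < ε → ∃ N, ∀ a ∈ A, a ≤ partialSups f N + ε • u) :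
    ∃ s, Tendsto (partialSups f) atTop (𝓝 s) ∧ IsLUB A s := by
  obtain ⟨s, hs⟩ := cauchySeq_tendsto_of_complete <|
    cauchySeq_partialSups_of_le_add_smul u fun ε hε => (h ε hε).imp fun N hN k => hN _ (hfA k)
  refine ⟨s, hs, fun a ha => ?_, fun c hc => ?_⟩
  · have hcont : Tendsto (fun ε : ℝ => s + ε • u) (𝓝[>] 0) (𝓝 s) :=
      tendsto_nhdsWithin_of_tendsto_nhds <|
        (by fun_prop : Continuous fun ε : ℝ => s + ε • u).tendsto' 0 s (by simp)
    refine ge_of_tendsto hcont (eventually_mem_nhdsWithin.mono fun ε (hε : 0 < ε) => ?_)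
    obtain ⟨N, hN⟩ := h ε hε
    exact (hN a ha).trans (add_le_add_left ((partialSups_monotone f).ge_of_tendsto hs N) _)
  · exact le_of_tendsto' hs fun n => partialSups_le f n c fun k _ => hc (hfA k)

end SolidNorm

lemma abs_smul_le {R M : Type*} [Ring R] [LinearOrder R] [IsOrderedRing R] [AddCommGroup M]
    [Lattice M] [IsOrderedAddMonoid M] [Module R M] [PosSMulMono R M] (r : R) (x : M) :
    |r • x| ≤ |r| • |x| := by
  have hx := smul_le_smul_of_nonneg_left (le_abs_self x) (abs_nonneg r)
  have hnx := smul_le_smul_of_nonneg_left (neg_le_abs x) (abs_nonneg r)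
  rcases abs_choice r with hr | hr <;> rw [hr] at hx hnx ⊢
  · exact abs_le'.2 ⟨hx, by rwa [← smul_neg]⟩
  · exact abs_le'.2 ⟨by simpa using hnx, by simpa using hx⟩

theorem LinearMap.exists_abs_apply_le_norm_smul {E M : Type*} [NormedAddCommGroup E]
    [NormedSpace ℝ E] [FiniteDimensional ℝ E] [AddCommGroup M] [Lattice M]
    [IsOrderedAddMonoid M] [Module ℝ M] [PosSMulMono ℝ M] (T : E →ₗ[ℝ] M) :
    ∃ u, 0 ≤ u ∧ ∀ v, |T v| ≤ ‖v‖ • u := by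
  let b := Module.finBasis ℝ E
  let φ : E →L[ℝ] (Fin (Module.finrank ℝ E) → ℝ) := b.equivFunL
  let C := ‖φ‖
  refine ⟨C • ∑ i, |T (b i)|,
    smul_nonneg (norm_nonneg _) (Finset.sum_nonneg fun i _ => abs_nonneg _), fun v => ?_⟩
  have hcoord : ∀ i, |b.repr v i| ≤ C * ‖v‖ := fun i =>
    (norm_le_pi_norm (φ v) i).trans (φ.le_opNorm v)
  calc |T v| = |∑ i, b.repr v i • T (b i)| := by
        conv_lhs => rw [← b.sum_repr v]
        simp only [map_sum, map_smul]
    _ ≤ ∑ i, |b.repr v i| • |T (b i)| :=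
        (Finset.le_sum_of_subadditive _ abs_zero.le abs_add_le _ _).trans
          (Finset.sum_le_sum fun i _ => abs_smul_le _ _)
    _ ≤ ∑ i, (C * ‖v‖) • |T (b i)| :=
        Finset.sum_le_sum fun i _ => smul_le_smul_of_nonneg_right (hcoord i) (abs_nonneg _)
    _ = ‖v‖ • C • ∑ i, |T (b i)| := by
        rw [smul_smul, Finset.smul_sum, mul_comm]

theorem IsCompact.exists_initial_net_of_subset_closure_range {α : Type*} [PseudoMetricSpace α]
    {K : Set α} (hK : IsCompact K) {w : ℕ → α} (hw : K ⊆ closure (Set.range w)) {ε : ℝ}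
    (hε : 0 < ε) : ∃ N, ∀ z ∈ K, ∃ k ≤ N, dist z (w k) < ε := by
  obtain ⟨N, hN⟩ := hK.elim_directed_cover (fun N => ⋃ k ≤ N, ball (w k) ε)
    (fun N => isOpen_biUnion fun k _ => isOpen_ball)
    (fun z hz => by
      obtain ⟨k, hk⟩ := mem_closure_range_iff.1 (hw hz) ε hε
      exact Set.mem_iUnion.2 ⟨k, Set.mem_iUnion₂.2 ⟨k, le_rfl, mem_ball.2 hk⟩⟩)
    (Monotone.directed_le fun m n hmn =>
      Set.iUnion₂_mono' fun k hk => ⟨k, hk.trans hmn, subset_rfl⟩)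
  refine ⟨N, fun z hz => ?_⟩
  simpa [mem_ball] using hN hz

lemma partialSups_eq_sup'_univ_fin {α : Type*} [SemilatticeSup α] (f : ℕ → α) (n : ℕ) :
    partialSups f n = Finset.univ.sup' Finset.univ_nonempty fun k : Fin (n + 1) => f k :=
  le_antisymm
    (partialSups_le f n _ fun j hj =>
      Finset.le_sup' (fun k : Fin (n + 1) => f k) (Finset.mem_univ ⟨j, Nat.lt_succ_of_le hj⟩))
    (Finset.sup'_le _ _ fun k _ => le_partialSups_of_le f (Nat.le_of_lt_succ k.isLt))

lemma LinearMap.abs_apply_le_norm_smul_of_mem_upperBounds {E M : Type*} [NormedAddCommGroup E]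
    [NormedSpace ℝ E] [AddCommGroup M] [Lattice M] [IsOrderedAddMonoid M] [Module ℝ M]
    [PosSMulMono ℝ M] (T : E →ₗ[ℝ] M) {s : M}
    (hs : s ∈ upperBounds {y | ∃ z : E, ‖z‖ ≤ 1 ∧ y = |T z|}) (v : E) :
    |T v| ≤ ‖v‖ • s := by
  rcases eq_or_ne v 0 with rfl | hv
  · simp
  calc |T v| = |‖v‖ • T (‖v‖⁻¹ • v)| := by
        rw [← map_smul, smul_inv_smul₀ (norm_ne_zero_iff.2 hv)]
    _ ≤ ‖v‖ • |T (‖v‖⁻¹ • v)| := by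
        simpa only [abs_norm] using abs_smul_le ‖v‖ (T (‖v‖⁻¹ • v))
    _ ≤ ‖v‖ • s :=
        smul_le_smul_of_nonneg_left (hs ⟨_, (norm_smul_inv_norm hv).le, rfl⟩) (norm_nonneg v)

section Operator

variable {E X : Type*} [NormedAddCommGroup E] [NormedSpace ℝ E] [NormedAddCommGroup X] [Lattice X]
  [NormedSpace ℝ X]

def majorizingBounds (T : E →L[ℝ] X) : Set ℝ :=
  {M | ∀ (n : ℕ) (x : Fin (n + 1) → E),
    ‖Finset.univ.sup' Finset.univ_nonempty (fun k => |T (x k)|)‖ ≤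
      M * Finset.univ.sup' Finset.univ_nonempty (fun k => ‖x k‖)}

lemma ContinuousLinearMap.norm_mem_majorizingBounds [HasSolidNorm X] [IsOrderedAddMonoid X]
    (T : E →L[ℝ] X) {s : X} (hs : s ∈ upperBounds {y | ∃ z : E, ‖z‖ ≤ 1 ∧ y = |T z|}) :
    ‖s‖ ∈ majorizingBounds T := by
  intro n x
  have hs0 : 0 ≤ s := by simpa using hs ⟨0, by simp, rfl⟩
  set r := Finset.univ.sup' Finset.univ_nonempty fun k => ‖x k‖
  have hxr : ∀ k, ‖x k‖ ≤ r := fun k => Finset.le_sup' (fun k => ‖x k‖) (Finset.mem_univ k)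
  have hsup : Finset.univ.sup' Finset.univ_nonempty (fun k => |T (x k)|) ≤ r • s :=
    Finset.sup'_le _ _ fun k _ =>
      ((T : E →ₗ[ℝ] X).abs_apply_le_norm_smul_of_mem_upperBounds hs (x k)).trans
        (smul_le_smul_of_nonneg_right (hxr k) hs0)
  calc ‖Finset.univ.sup' Finset.univ_nonempty (fun k => |T (x k)|)‖ ≤ ‖r • s‖ :=
        norm_le_norm_of_nonneg_of_le
          ((abs_nonneg _).trans (Finset.le_sup' (fun k => |T (x k)|) (Finset.mem_univ 0))) hsup
    _ = ‖s‖ * r := by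
        rw [norm_smul, Real.norm_of_nonneg ((norm_nonneg _).trans (hxr 0)), mul_comm]

lemma ContinuousLinearMap.norm_le_of_mem_majorizingBounds [Nontrivial E] (T : E →L[ℝ] X)
    {w : ℕ → E} (hw : ∀ k, ‖w k‖ ≤ 1) {s : X}
    (hlim : Tendsto (partialSups fun k => |T (w k)|) atTop (𝓝 s)) {M : ℝ}
    (hM : M ∈ majorizingBounds T) : ‖s‖ ≤ M := by
  obtain ⟨e, he⟩ := exists_norm_eq E zero_le_one
  have hM0 : 0 ≤ M := by simpa [he] using (norm_nonneg _).trans (hM 0 fun _ => e)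
  refine le_of_tendsto' hlim.norm fun n => ?_
  calc ‖partialSups (fun k => |T (w k)|) n‖
      ≤ M * Finset.univ.sup' Finset.univ_nonempty (fun k : Fin (n + 1) => ‖w k‖) := by
        rw [partialSups_eq_sup'_univ_fin]
        exact hM n _
    _ ≤ M * 1 := mul_le_mul_of_nonneg_left (Finset.sup'_le _ _ fun k _ => hw k) hM0
    _ = M := mul_one M

lemma ContinuousLinearMap.majorizingBounds_eq_univ [IsOrderedAddMonoid X] [Subsingleton E]
    (T : E →L[ℝ] X) :
    majorizingBounds T = Set.univ :=
  Set.eq_univ_of_forall fun M n x => by simp [Subsingleton.elim _ (0 : E)]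

theorem ContinuousLinearMap.exists_tendsto_partialSups_isLUB [HasSolidNorm X]
    [IsOrderedAddMonoid X] [FiniteDimensional ℝ E] [CompleteSpace X] (T : E →L[ℝ] X) :
    ∃ w : ℕ → E, (∀ k, ‖w k‖ ≤ 1) ∧ ∃ s, Tendsto (partialSups fun k => |T (w k)|) atTop (𝓝 s) ∧
      IsLUB {y | ∃ z : E, ‖z‖ ≤ 1 ∧ y = |T z|} s := by
  obtain ⟨u, hu0, hu⟩ := (T : E →ₗ[ℝ] X).exists_abs_apply_le_norm_smul
  let K := closedBall (0 : E) 1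
  have : Nonempty K := ⟨⟨0, mem_closedBall_self zero_le_one⟩⟩
  let w : ℕ → E := fun k => TopologicalSpace.denseSeq K k
  have hKw : K ⊆ closure (Set.range w) := by
    have := Subtype.dense_iff.1 (TopologicalSpace.denseRange_denseSeq K)
    rw [← Set.range_comp] at this
    exact this
  have hw : ∀ k, ‖w k‖ ≤ 1 := fun k =>
    mem_closedBall_zero_iff.1 (TopologicalSpace.denseSeq K k).2
  refine ⟨w, hw, exists_tendsto_partialSups_isLUB_of_le_add_smul (fun k => ⟨w k, hw k, rfl⟩) u
    fun ε hε => ?_⟩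
  obtain ⟨N, hN⟩ :=
    (isCompact_closedBall 0 1).exists_initial_net_of_subset_closure_range hKw hε
  refine ⟨N, ?_⟩
  rintro _ ⟨z, hz, rfl⟩
  obtain ⟨k, hkN, hk⟩ := hN z (mem_closedBall_zero_iff.2 hz)
  calc |T z| ≤ |T (w k)| + |T (z - w k)| := by simpa using abs_add_le (T (w k)) (T (z - w k))
    _ ≤ partialSups (fun k => |T (w k)|) N + ε • u :=
        add_le_add (le_partialSups_of_le (fun k => |T (w k)|) hkN)
          ((hu _).trans (smul_le_smul_of_nonneg_right (by rw [← dist_eq_norm]; exact hk.le) hu0))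

end Operator

/-- Let `E` be a finite-dimensional normed space, `X` a Banach lattice, and `T : E → X` a
bounded linear operator. Then `s = ⋁_{‖z‖≤1} |Tz|` exists in `X`, and `‖s‖` equals the
majorizing norm of `T`, i.e. the smallest `M` with
`‖⋁_{k} |T x_k|‖ ≤ M · max_k ‖x_k‖` for all finite families `x₁,…,xₙ ∈ E`. -/
theorem stmt17 (E X : Type*) [NormedAddCommGroup E] [NormedSpace ℝ E]
    [FiniteDimensional ℝ E]
    [NormedAddCommGroup X] [Lattice X] [HasSolidNorm X] [IsOrderedAddMonoid X] [NormedSpace ℝ X] [CompleteSpace X]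
    (T : E →L[ℝ] X) :
    ∃ s : X, IsLUB {y : X | ∃ z : E, ‖z‖ ≤ 1 ∧ y = |T z|} s ∧
      ‖s‖ = sInf {M : ℝ | ∀ (n : ℕ) (x : Fin (n + 1) → E),
        ‖Finset.univ.sup' Finset.univ_nonempty (fun k => |T (x k)|)‖ ≤
          M * Finset.univ.sup' Finset.univ_nonempty (fun k => ‖x k‖)} := by
  obtain ⟨w, hw, s, hlim, hlub⟩ := T.exists_tendsto_partialSups_isLUB
  refine ⟨s, hlub, ?_⟩
  change ‖s‖ = sInf (majorizingBounds T)
  rcases subsingleton_or_nontrivial E with hE | hE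
  · -- every `M` is admissible, and `sInf` of the unbounded set `univ` is `0` in `ℝ`
    have hs : s = 0 := hlub.unique (by simp [Subsingleton.elim _ (0 : E)])
    rw [T.majorizingBounds_eq_univ, Real.sInf_of_not_bddBelow not_bddBelow_univ, hs, norm_zero]
  · exact (IsLeast.csInf_eq ⟨T.norm_mem_majorizingBounds hlub.1,
      fun M hM => T.norm_le_of_mem_majorizingBounds hw hlim hM⟩).symm
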